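/- arXiv:0806.2130 — 6 statements merged into one kernel-verified Lean document; each statement's English description precedes it below -/
import Mathlib

section
/- Let G be a group, H a normal subgroup of G, and g ∈ G. Suppose that the conjugation action of H on the coset gH is transitive, i.e. gH = {h g h⁻¹ : h ∈ H}. Then H is contained in the commutator subgroup [G, G] of G. -/
open scoped commutatorElement

/-- If the conjugation action of a normal subgroup `H` on the coset `gH` is transitive,
then `H` is contained in the commutator subgroup of `G`. -/
theorem stmt_0 (G : Type*) [Group G] (H : Subgroup G) [H.Normal] (g : G)
    (htrans : {x : G | ∃ h ∈ H, x = g * h} = {x : G | ∃ h ∈ H, x = h * g * h⁻¹}) :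
    H ≤ commutator G := by
  intro k hk
  have hmem : (g * k) ∈ {x : G | ∃ h ∈ H, x = h * g * h⁻¹} := by
    rw [← htrans]; exact ⟨k, hk, rfl⟩
  obtain ⟨h, _, heq⟩ := hmem
  have hk3 : k = ⁅g⁻¹, h⁆ := by
    have : k = g⁻¹ * (h * g * h⁻¹) := by rw [← heq]; group
    rw [this, commutatorElement_def]; group
  rw [hk3]
  exact Subgroup.commutator_mem_commutator (by trivial) (by trivial)
end

section
/- Let k be a field, n ≥ 1, and let A = (a_{ij}) be an n×n integer matrix with det(A − E) ≠ 0, and set d = |det(A − E)|. Let φ_A be the group endomorphism of the torus (k*)ⁿ defined by (φ_A(t))_j = ∏_{i=1}^{n} t_i^{a_{ij}}. Then every fixed point t ∈ (k*)ⁿ of φ_A satisfies t_j^d = 1 for all j = 1, …, n; in particular the order of every fixed point of φ_A divides |det(A − E)|. -/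
private lemma zpow_finset_sum {G : Type*} [CommGroup G] {ι : Type*} (x : G)
    (s : Finset ι) (f : ι → ℤ) : x ^ (∑ i ∈ s, f i) = ∏ i ∈ s, x ^ f i := by
  classical
  induction s using Finset.cons_induction with
  | empty => simp
  | cons a s ha ih => rw [Finset.sum_cons, Finset.prod_cons, zpow_add, ih]

/-- Every fixed point of the torus endomorphism `φ_A` attached to an integer matrix `A`
with `det (A - 1) ≠ 0` satisfies `t_j ^ |det (A - 1)| = 1` for all `j`; in particular
its order divides `|det (A - 1)|`. -/
theorem stmt_6 (k : Type*) [Field k] (n : ℕ) (hn : 1 ≤ n)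
    (A : Matrix (Fin n) (Fin n) ℤ) (hdet : (A - 1).det ≠ 0)
    (t : Fin n → kˣ) (hfix : ∀ j, (∏ i, t i ^ A i j) = t j) :
    (∀ j, t j ^ (A - 1).det.natAbs = 1) ∧ orderOf t ∣ (A - 1).det.natAbs := by
  set B := A - 1 with hB
  have hone : ∀ j, (∏ i, t i ^ ((1 : Matrix (Fin n) (Fin n) ℤ) i j)) = t j := by
    intro j
    rw [Finset.prod_eq_single j]
    · simp [Matrix.one_apply_eq]
    · intro i _ hij; simp [Matrix.one_apply_ne hij]
    · simp
  have h1 : ∀ j, (∏ i, t i ^ B i j) = 1 := by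
    intro j
    have h2 : (∏ i, t i ^ B i j)
        = (∏ i, t i ^ A i j) * (∏ i, t i ^ ((1 : Matrix (Fin n) (Fin n) ℤ) i j))⁻¹ := by
      rw [← Finset.prod_inv_distrib, ← Finset.prod_mul_distrib]
      refine Finset.prod_congr rfl fun i _ => ?_
      rw [← zpow_neg, ← zpow_add, hB, Matrix.sub_apply, sub_eq_add_neg]
    rw [h2, hfix j, hone j, mul_inv_cancel]
  have key : ∀ l, t l ^ B.det = 1 := by
    intro l
    have hc : (1 : kˣ) = ∏ i, t i ^ (∑ j, B i j * B.adjugate j l) := by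
      calc (1 : kˣ) = ∏ j, (∏ i, t i ^ B i j) ^ (B.adjugate j l) := by simp [h1]
        _ = ∏ j, ∏ i, (t i ^ B i j) ^ (B.adjugate j l) := by
            refine Finset.prod_congr rfl fun j _ => ?_
            rw [Finset.prod_zpow]
        _ = ∏ i, ∏ j, t i ^ (B i j * B.adjugate j l) := by
            rw [Finset.prod_comm]
            exact Finset.prod_congr rfl fun i _ => Finset.prod_congr rfl
              fun j _ => (zpow_mul _ _ _).symm
        _ = ∏ i, t i ^ (∑ j, B i j * B.adjugate j l) := by
            exact Finset.prod_congr rfl fun i _ => (zpow_finset_sum _ _ _).symm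
    have hsum : ∀ i, (∑ j, B i j * B.adjugate j l)
        = B.det * (1 : Matrix (Fin n) (Fin n) ℤ) i l := by
      intro i
      have := congrArg (fun M => M i l) (Matrix.mul_adjugate B)
      simpa [Matrix.mul_apply, Matrix.smul_apply] using this
    rw [hc]
    rw [Finset.prod_eq_single l]
    · rw [hsum l, Matrix.one_apply_eq, mul_one]
    · intro i _ hil; rw [hsum i, Matrix.one_apply_ne' (Ne.symm hil)]; simp
    · simp
  have hpow : ∀ j, t j ^ B.det.natAbs = 1 := by
    intro j
    have hz : t j ^ (B.det.natAbs : ℤ) = 1 := by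
      rcases Int.natAbs_eq B.det with h | h
      · rw [← h]; exact key j
      · rw [← neg_neg ((B.det.natAbs : ℤ)), ← h, zpow_neg, key j, inv_one]
    rw [← zpow_natCast]; exact hz
  refine ⟨hpow, ?_⟩
  apply orderOf_dvd_of_pow_eq_one
  funext j
  simpa using hpow j
end

section
/- Let k be an algebraically closed field of characteristic zero, n ≥ 1, G a group, and N a normal subgroup of G that is isomorphic as an abstract group to the torus (k*)ⁿ. Let g ∈ G and m ≥ 1 with gᵐ ∈ N, and let φ be the automorphism of N given by φ(t) = g⁻¹ t g. Then φ has finite order k₀ dividing m, and there exists t₀ ∈ N such that (g t₀)^{m k₀} = 1. -/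
/-- Proposition 6: if `N ⊴ G` is isomorphic to a torus `(kˣ)ⁿ`, `gᵐ ∈ N`, and `φ` is
conjugation by `g` on `N`, then `φ` has finite order `k₀` dividing `m` and there is
`t₀ ∈ N` with `(g t₀)^{m k₀} = 1`. -/
theorem stmt_12 (k : Type*) [Field k] [IsAlgClosed k] [CharZero k] (n : ℕ) (hn : 1 ≤ n)
    (G : Type*) [Group G] (N : Subgroup G) [N.Normal] (e : N ≃* (Fin n → kˣ))
    (g : G) (m : ℕ) (hm : 1 ≤ m) (hgm : g ^ m ∈ N)
    (φ : MulAut N) (hφ : ∀ t : N, ((φ t : G)) = g⁻¹ * (t : G) * g) :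
    0 < orderOf φ ∧ orderOf φ ∣ m ∧
      ∃ t₀ : N, (g * (t₀ : G)) ^ (m * orderOf φ) = 1 := by
  -- N is commutative
  have hcomm : ∀ a b : N, a * b = b * a := by
    intro a b
    apply e.injective
    simp only [map_mul]
    exact mul_comm _ _
  letI : CommGroup N := { (inferInstance : Group ↥N) with mul_comm := hcomm }
  -- iterated conjugation formula
  have hφpow : ∀ (i : ℕ) (t : N), (((φ ^ i) t : G)) = (g ^ i)⁻¹ * (t : G) * g ^ i := by
    intro i
    induction i with
    | zero => intro t; simp
    | succ i ih =>
      intro t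
      have : (φ ^ (i + 1)) t = (φ ^ i) (φ t) := by
        rw [pow_succ]; rfl
      rw [this, ih (φ t), hφ t, pow_succ]
      group
  -- φ ^ m = 1
  have hφm : φ ^ m = 1 := by
    ext t
    have h1 : (((φ ^ m) t : G)) = (g ^ m)⁻¹ * (t : G) * g ^ m := hφpow m t
    have h2 : ((⟨g ^ m, hgm⟩ : N) : G) * (t : G) = (t : G) * ((⟨g ^ m, hgm⟩ : N) : G) := by
      have := hcomm ⟨g ^ m, hgm⟩ t
      exact_mod_cast congrArg (Subtype.val) this
    have : (((φ ^ m) t : G)) = (t : G) := by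
      rw [h1]
      have h3 : (g ^ m) * (t : G) = (t : G) * g ^ m := h2
      rw [mul_assoc, ← h3, ← mul_assoc]
      simp
    simpa using this
  have hord : orderOf φ ∣ m := orderOf_dvd_of_pow_eq_one hφm
  have hpos : 0 < orderOf φ := by
    have : IsOfFinOrder φ := isOfFinOrder_iff_pow_eq_one.mpr ⟨m, hm, hφm⟩
    exact this.orderOf_pos
  refine ⟨hpos, hord, ?_⟩
  set k₀ := orderOf φ with hk₀
  -- s = g^m as an element of N, fixed by φ
  set s : N := ⟨g ^ m, hgm⟩ with hs
  -- find m-th root u of s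
  obtain ⟨u, hu⟩ : ∃ u : N, u ^ m = s := by
    have : ∀ i : Fin n, ∃ d : kˣ, d ^ m = e s i := by
      intro i
      obtain ⟨z, hz⟩ := IsAlgClosed.exists_pow_nat_eq ((e s i : kˣ) : k) (show 0 < m from hm)
      have hz0 : z ≠ 0 := by
        intro h
        rw [h, zero_pow (by omega)] at hz
        exact (Units.ne_zero (e s i)) hz.symm
      refine ⟨Units.mk0 z hz0, ?_⟩
      ext
      push_cast
      exact hz
    choose d hd using this
    refine ⟨e.symm d, ?_⟩
    apply e.injective
    rw [map_pow, MulEquiv.apply_symm_apply]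
    funext i
    exact hd i
  -- main product formula
  have key : ∀ (t : N) (r : ℕ),
      (g * (t : G)) ^ r = g ^ r * ((∏ i ∈ Finset.range r, (φ ^ i) t : N) : G) := by
    intro t r
    induction r with
    | zero => simp
    | succ r ih =>
      rw [pow_succ, ih]
      have hc : ∀ c : N, (c : G) * g = g * ((φ c : N) : G) := by
        intro c
        rw [hφ c]
        group
      calc g ^ r * ((∏ i ∈ Finset.range r, (φ ^ i) t : N) : G) * (g * (t : G))
          = g ^ r * (((∏ i ∈ Finset.range r, (φ ^ i) t : N) : G) * g) * (t : G) := by group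
        _ = g ^ r * (g * ((φ (∏ i ∈ Finset.range r, (φ ^ i) t) : N) : G)) * (t : G) := by
            rw [hc]
        _ = g ^ (r + 1) * (((φ (∏ i ∈ Finset.range r, (φ ^ i) t)) * t : N) : G) := by
            push_cast; rw [pow_succ]; group
        _ = g ^ (r + 1) * ((∏ i ∈ Finset.range (r + 1), (φ ^ i) t : N) : G) := by
            congr 2
            rw [Finset.prod_range_succ', map_prod]
            congr 1
            exact Finset.prod_congr rfl fun i _ => by
              rw [← MulAut.mul_apply, ← pow_succ']
  -- the product collapses for t₀ = u⁻¹
  refine ⟨u⁻¹, ?_⟩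
  rw [key u⁻¹ (m * k₀)]
  have hprod : (∏ i ∈ Finset.range (m * k₀), (φ ^ i) u⁻¹) = (s ^ k₀)⁻¹ := by
    have hper : ∀ j i : ℕ, (φ ^ (j * k₀ + i)) u⁻¹ = (φ ^ i) u⁻¹ := by
      intro j i
      rw [pow_add, pow_mul', pow_orderOf_eq_one, one_pow, one_mul]
    have hB : ∀ j : ℕ, (∏ i ∈ Finset.range (j * k₀), (φ ^ i) u⁻¹)
        = (∏ i ∈ Finset.range k₀, (φ ^ i) u⁻¹) ^ j := by
      intro j
      induction j with
      | zero => simp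
      | succ j ih =>
        rw [Nat.succ_mul, Finset.prod_range_add, ih, pow_succ]
        congr 1
        exact Finset.prod_congr rfl fun i _ => hper j i
    rw [hB m, ← Finset.prod_pow]
    have : ∀ i ∈ Finset.range k₀, ((φ ^ i) u⁻¹) ^ m = s⁻¹ := by
      intro i _
      rw [← map_pow, inv_pow, hu, map_inv]
      congr 1
      -- φ fixes s
      apply Subtype.ext
      rw [hφpow i s]
      show (g ^ i)⁻¹ * g ^ m * g ^ i = g ^ m
      group
    rw [Finset.prod_congr rfl this, Finset.prod_const, Finset.card_range, inv_pow]
  rw [hprod]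
  push_cast
  rw [← pow_mul]
  group
end

section
/- Let k be an algebraically closed field of characteristic zero, n ≥ 1, G a group, and N a normal subgroup of G that is isomorphic as an abstract group to the torus (k*)ⁿ. Let g ∈ G and m ≥ 1 with gᵐ ∈ N, let φ be the automorphism of N given by φ(t) = g⁻¹ t g, and let k₀ be its (necessarily finite) order. Suppose in addition that all elements of the coset gN are conjugate under N, i.e. gN = {t g t⁻¹ : t ∈ N}. Then every element x ∈ gN satisfies x^{m k₀} = 1; in particular the order of every element of gN divides m k₀. -/
/-- Corollary 5: if moreover all elements of the coset `gN` are conjugate under `N`,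
then every element `x ∈ gN` satisfies `x^{m k₀} = 1`, where `k₀` is the order of the
conjugation automorphism `φ` of `N`. -/
theorem stmt_13 (k : Type*) [Field k] [IsAlgClosed k] [CharZero k] (n : ℕ) (hn : 1 ≤ n)
    (G : Type*) [Group G] (N : Subgroup G) [N.Normal] (e : N ≃* (Fin n → kˣ))
    (g : G) (m : ℕ) (hm : 1 ≤ m) (hgm : g ^ m ∈ N)
    (φ : MulAut N) (hφ : ∀ t : N, ((φ t : G)) = g⁻¹ * (t : G) * g)
    (htrans : {x : G | ∃ t ∈ N, x = g * t} = {x : G | ∃ t ∈ N, x = t * g * t⁻¹}) :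
    ∀ x ∈ {x : G | ∃ t ∈ N, x = g * t}, x ^ (m * orderOf φ) = 1 := by
  classical
  -- N is commutative (transported from the torus)
  have hcomm : ∀ a b : N, a * b = b * a := by
    intro a b
    apply e.injective
    simp [map_mul, mul_comm]
  letI : CommGroup ↥N := { (inferInstance : Group ↥N) with mul_comm := hcomm }
  have hcommG : ∀ a b : N, (a : G) * b = (b : G) * a := by
    intro a b
    exact congrArg Subtype.val (hcomm a b)
  -- conjugation by powers of g
  have hconj : ∀ (j : ℕ) (t : N), ((φ ^ j) t : G) = (g ^ j)⁻¹ * (t : G) * g ^ j := by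
    intro j
    induction j with
    | zero => intro t; simp
    | succ j ih =>
      intro t
      have h1 : (φ ^ (j + 1)) t = (φ ^ j) (φ t) := by
        rw [pow_succ]
        rfl
      rw [h1, ih (φ t), hφ t, pow_succ]
      group
  -- φ^m = 1
  have hφm : φ ^ m = 1 := by
    ext t
    have hj := hconj m t
    have hc : (⟨g ^ m, hgm⟩ : N) * t = t * ⟨g ^ m, hgm⟩ := hcomm _ _
    have hcG : g ^ m * (t : G) = (t : G) * g ^ m := congrArg Subtype.val hc
    show ((φ ^ m) t : G) = ((1 : MulAut N) t : G)
    rw [MulAut.one_apply, hj, mul_assoc, ← hcG, ← mul_assoc, inv_mul_cancel, one_mul]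
  set k0 := orderOf φ with hk0
  have hk0m : k0 ∣ m := orderOf_dvd_of_pow_eq_one hφm
  have hφk0 : φ ^ k0 = 1 := pow_orderOf_eq_one φ
  have hk0pos : 0 < k0 := by
    rcases Nat.eq_zero_or_pos k0 with h | h
    · exfalso
      have := Nat.eq_zero_of_zero_dvd (h ▸ hk0m)
      omega
    · exact h
  set q := m / k0 with hqdef
  have hqm : k0 * q = m := Nat.mul_div_cancel' hk0m
  have hqpos : 0 < q := by
    rcases Nat.eq_zero_or_pos q with h | h
    · exfalso; rw [h, Nat.mul_zero] at hqm; omega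
    · exact h
  -- the partial norm maps
  set P : ℕ → N → N := fun j s => ∏ i ∈ Finset.range j, (φ ^ i) s with hP
  have hPmulhom : ∀ (j : ℕ) (s t : N), P j (s * t) = P j s * P j t := by
    intro j s t
    simp only [hP, map_mul, Finset.prod_mul_distrib]
  have hPpow : ∀ (j : ℕ) (s : N) (a : ℕ), P j (s ^ a) = (P j s) ^ a := by
    intro j s a
    simp only [hP, map_pow, Finset.prod_pow]
  -- (g s)^j = g^j * P j s
  have hgs : ∀ (j : ℕ) (s : N), (g * (s : G)) ^ j = g ^ j * (P j s : G) := by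
    intro j s
    induction j with
    | zero => simp [hP]
    | succ j ih =>
      rw [pow_succ', ih]
      have hs : (s : G) * g ^ j = g ^ j * ((φ ^ j) s : G) := by
        rw [hconj j s]; group
      have hPsucc : P (j + 1) s = (φ ^ j) s * P j s := by
        simp only [hP, Finset.prod_range_succ]
        exact hcomm _ _
      rw [hPsucc]
      push_cast
      rw [mul_assoc, ← mul_assoc (s : G), hs, pow_succ]
      group
  -- all elements of gN have m-th power equal to g^m, hence P m s = 1
  have hPm1 : ∀ s : N, P m s = 1 := by
    intro s
    have hmem : g * (s : G) ∈ {x : G | ∃ t ∈ N, x = g * t} := ⟨s, s.2, rfl⟩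
    rw [htrans] at hmem
    obtain ⟨t, ht, hxt⟩ := hmem
    have hcG : (t : G) * g ^ m = g ^ m * t := hcommG ⟨t, ht⟩ ⟨g ^ m, hgm⟩
    have hxm : (g * (s : G)) ^ m = g ^ m := by
      rw [hxt]
      have : (t * g * t⁻¹) ^ m = t * g ^ m * t⁻¹ := by
        rw [← MulAut.conj_apply, ← map_pow, MulAut.conj_apply]
      rw [this, hcG]
      group
    have hh := hgs m s
    rw [hxm] at hh
    have h1 : (P m s : G) = 1 := mul_eq_left.mp hh.symm
    exact Subtype.ext h1
  -- P m s = (P k0 s)^q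
  have hPdecomp : ∀ (a : ℕ) (s : N), P (k0 * a) s = (P k0 s) ^ a := by
    intro a s
    induction a with
    | zero => simp [hP]
    | succ a ih =>
      have : k0 * (a + 1) = k0 * a + k0 := by ring
      rw [this]
      simp only [hP] at ih ⊢
      rw [Finset.prod_range_add, ih, pow_succ]
      congr 1
      apply Finset.prod_congr rfl
      intro i _
      rw [pow_add, pow_mul, hφk0, one_pow, one_mul]
  -- every element of N is a q-th power
  have hdiv : ∀ t : N, ∃ s : N, s ^ q = t := by
    intro t
    have hroot : ∀ i : Fin n, ∃ u : kˣ, u ^ q = e t i := by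
      intro i
      obtain ⟨z, hz⟩ := IsAlgClosed.exists_pow_nat_eq (k := k) (e t i : k) hqpos
      have hz0 : z ≠ 0 := by
        intro h
        rw [h, zero_pow (by omega)] at hz
        exact (Units.ne_zero (e t i)) hz.symm
      refine ⟨Units.mk0 z hz0, ?_⟩
      ext
      push_cast
      exact hz
    choose u hu using hroot
    refine ⟨e.symm u, ?_⟩
    apply e.injective
    rw [map_pow, MulEquiv.apply_symm_apply]
    funext i
    exact hu i
  -- hence P k0 t = 1 for all t
  have hPk0 : ∀ t : N, P k0 t = 1 := by
    intro t
    obtain ⟨s, hs⟩ := hdiv t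
    rw [← hs, hPpow, ← hPdecomp, hqm, hPm1]
  -- φ fixes g^m
  have hfix : φ (⟨g ^ m, hgm⟩ : N) = ⟨g ^ m, hgm⟩ := by
    apply Subtype.ext
    rw [hφ]
    simp only
    group
  have hfixpow : ∀ i : ℕ, (φ ^ i) (⟨g ^ m, hgm⟩ : N) = ⟨g ^ m, hgm⟩ := by
    intro i
    induction i with
    | zero => rfl
    | succ i ih =>
      have h1 : (φ ^ (i + 1)) (⟨g ^ m, hgm⟩ : N) = (φ ^ i) (φ ⟨g ^ m, hgm⟩) := by
        rw [pow_succ]; rfl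
      rw [h1, hfix, ih]
  -- conclude g^(m*k0) = 1
  have hgmk0 : g ^ (m * k0) = 1 := by
    have h1 : P k0 (⟨g ^ m, hgm⟩ : N) = (⟨g ^ m, hgm⟩ : N) ^ k0 := by
      simp only [hP]
      rw [Finset.prod_congr rfl fun i _ => hfixpow i, Finset.prod_const,
        Finset.card_range]
    have h2 := hPk0 (⟨g ^ m, hgm⟩ : N)
    rw [h1] at h2
    have h3 := congrArg Subtype.val h2
    simp only [SubgroupClass.coe_pow, OneMemClass.coe_one] at h3
    rw [pow_mul]
    exact h3
  -- final conclusion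
  intro x hx
  rw [htrans] at hx
  obtain ⟨t, ht, hxt⟩ := hx
  rw [hxt]
  have : (t * g * t⁻¹) ^ (m * k0) = t * g ^ (m * k0) * t⁻¹ := by
    rw [← MulAut.conj_apply, ← map_pow, MulAut.conj_apply]
  rw [this, hgmk0]
  group
end

section
/- Let k be a field, n ≥ 1, G a group, N a normal subgroup of G, and e : N → (k*)ⁿ a group isomorphism. Let g ∈ G and m ≥ 1 with gᵐ ∈ N, and suppose there is an n×n integer matrix A = (a_{ij}) with det(A − E) ≠ 0 such that e(g⁻¹ t g) = φ_A(e(t)) for all t ∈ N, where (φ_A(s))_j = ∏_{i=1}^{n} s_i^{a_{ij}}. Then g^{m·d} = 1, where d = |det(A − E)|. -/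
private lemma zpow_sum_aux {M ι : Type*} [CommGroup M] (a : M) (s : Finset ι) (f : ι → ℤ) :
    a ^ (∑ i ∈ s, f i) = ∏ i ∈ s, a ^ f i := by
  classical
  induction s using Finset.induction with
  | empty => simp
  | insert _ _ h ih => rw [Finset.sum_insert h, Finset.prod_insert h, zpow_add, ih]

/-- Proposition 7: if conjugation by `g` on `N ≅ (kˣ)ⁿ` is given by an integer matrix `A`
with `det (A - 1) ≠ 0`, and `gᵐ ∈ N`, then `g^{m·|det(A-1)|} = 1`. -/
theorem stmt_14 (k : Type*) [Field k] (n : ℕ) (hn : 1 ≤ n)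
    (G : Type*) [Group G] (N : Subgroup G) [N.Normal] (e : N ≃* (Fin n → kˣ))
    (g : G) (m : ℕ) (hm : 1 ≤ m) (hgm : g ^ m ∈ N)
    (A : Matrix (Fin n) (Fin n) ℤ) (hdet : (A - 1).det ≠ 0)
    (hconj : ∀ (t : G) (ht : t ∈ N) (ht' : g⁻¹ * t * g ∈ N),
      e ⟨g⁻¹ * t * g, ht'⟩ = fun j => ∏ i, (e ⟨t, ht⟩) i ^ A i j) :
    g ^ (m * (A - 1).det.natAbs) = 1 := by
  set B := A - 1 with hB
  set s : Fin n → kˣ := e ⟨g ^ m, hgm⟩ with hs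
  have hmem : g⁻¹ * g ^ m * g ∈ N := by
    have : g⁻¹ * g ^ m * g = g ^ m := by group
    rw [this]; exact hgm
  have hfix : s = fun j => ∏ i, s i ^ A i j := by
    have h := hconj (g ^ m) hgm hmem
    have heq : (⟨g⁻¹ * g ^ m * g, hmem⟩ : N) = ⟨g ^ m, hgm⟩ := by
      ext; group
    rw [heq] at h
    exact h
  have hker : ∀ j, ∏ i, s i ^ B i j = 1 := by
    intro j
    have hsj : s j = ∏ i, s i ^ A i j := congrFun hfix j
    have h1 : ∏ i, s i ^ B i j
        = (∏ i, s i ^ A i j) * ∏ i, s i ^ (-(1 : Matrix (Fin n) (Fin n) ℤ) i j) := by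
      rw [← Finset.prod_mul_distrib]
      refine Finset.prod_congr rfl fun i _ => ?_
      have hBij : B i j = A i j + (-(1 : Matrix (Fin n) (Fin n) ℤ)) i j := by
        simp [hB, sub_eq_add_neg]
      rw [hBij, zpow_add]
      simp [Matrix.neg_apply]
    have h2 : ∏ i, s i ^ (-(1 : Matrix (Fin n) (Fin n) ℤ) i j) = (s j)⁻¹ := by
      rw [Finset.prod_eq_single j]
      · simp [Matrix.one_apply]
      · intro i _ hij; simp [Matrix.one_apply, hij]
      · simp
    rw [h1, h2, ← hsj, mul_inv_cancel]
  have hpow : ∀ j, s j ^ B.det = 1 := by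
    intro j
    have key : ∏ i, s i ^ ((B * B.adjugate) i j) = 1 := by
      calc ∏ i, s i ^ ((B * B.adjugate) i j)
          = ∏ i, ∏ l, (s i ^ B i l) ^ B.adjugate l j := by
            refine Finset.prod_congr rfl fun i _ => ?_
            rw [Matrix.mul_apply, zpow_sum_aux]
            exact Finset.prod_congr rfl fun l _ => by rw [← zpow_mul]
        _ = ∏ l, (∏ i, s i ^ B i l) ^ B.adjugate l j := by
            rw [Finset.prod_comm]
            exact Finset.prod_congr rfl fun l _ => Finset.prod_zpow _ _ _
        _ = 1 := by
            refine Finset.prod_eq_one fun l _ => ?_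
            rw [hker l, one_zpow]
    have hdiag : ∀ i, (B * B.adjugate) i j = B.det * (1 : Matrix (Fin n) (Fin n) ℤ) i j := by
      intro i
      rw [Matrix.mul_adjugate]
      simp [Matrix.smul_apply]
    calc s j ^ B.det = ∏ i, s i ^ ((B * B.adjugate) i j) := by
          rw [Finset.prod_eq_single j]
          · rw [hdiag j]; simp [Matrix.one_apply]
          · intro i _ hij; rw [hdiag i]; simp [Matrix.one_apply, hij]
          · simp
      _ = 1 := key
  have hpowN : ∀ j, s j ^ B.det.natAbs = 1 := by
    intro j
    have := hpow j
    rcases Int.natAbs_eq B.det with h | h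
    · rw [← zpow_natCast, ← h, this]
    · rw [← zpow_natCast, ← neg_neg (B.det.natAbs : ℤ), ← h, zpow_neg, this, inv_one]
  have ht : (⟨g ^ m, hgm⟩ : N) ^ B.det.natAbs = 1 := by
    apply e.injective
    rw [map_pow, map_one, ← hs]
    funext j
    exact hpowN j
  have : (g ^ m) ^ B.det.natAbs = 1 := by
    have := congrArg (Subgroup.subtype N) ht
    simpa using this
  rw [pow_mul]
  exact this
end

section
/- Let K be a field of characteristic zero and let L be a two-dimensional non-abelian Lie algebra over K (i.e. dim_K L = 2 and the Lie bracket on L is not identically zero). Then every Lie algebra automorphism φ of L of finite order (φᵏ = id for some k ≥ 1) has a nonzero fixed vector: there exists x ∈ L with x ≠ 0 and φ(x) = x. In other words, L has no regular automorphism of finite order. -/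
/-- In a module of finrank 2, if `⁅x, y⁆ ≠ 0` then `x, y` span. -/
lemma aux_span {K : Type*} [Field K] {L : Type*} [LieRing L] [LieAlgebra K L]
    (hdim : Module.finrank K L = 2) {x y : L} (h : ⁅x, y⁆ ≠ 0) (u : L) :
    ∃ a b : K, a • x + b • y = u := by
  have hy0 : y ≠ 0 := by rintro rfl; simp at h
  have hli : LinearIndependent K ![x, y] := by
    rw [LinearIndependent.pair_iff]
    intro s t hst
    have h1 : s • ⁅x, y⁆ = 0 := by
      have h2 := congrArg (⁅·, y⁆) hst
      simpa [add_lie, smul_lie] using h2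
    have hs : s = 0 := (smul_eq_zero.mp h1).resolve_right h
    subst hs
    simp only [zero_smul, zero_add, smul_eq_zero] at hst
    exact ⟨rfl, hst.resolve_right hy0⟩
  haveI : FiniteDimensional K L := FiniteDimensional.of_finrank_pos (by omega)
  have hcard : Fintype.card (Fin 2) = Module.finrank K L := by simp [hdim]
  have hspan : Submodule.span K {x, y} = ⊤ := by
    have hB := (basisOfLinearIndependentOfCardEqFinrank hli hcard).span_eq
    rw [coe_basisOfLinearIndependentOfCardEqFinrank] at hB
    have hr : Set.range ![x, y] = {x, y} := by
      ext z; simp [Fin.exists_fin_two]; tauto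
    rwa [hr] at hB
  have hu : u ∈ Submodule.span K ({x, y} : Set L) := by rw [hspan]; trivial
  exact Submodule.mem_span_pair.mp hu

/-- A two-dimensional non-abelian Lie algebra over a field of characteristic zero has no
regular automorphism of finite order: every finite-order automorphism has a nonzero
fixed vector. -/
theorem stmt_16 (K : Type*) [Field K] [CharZero K]
    (L : Type*) [LieRing L] [LieAlgebra K L]
    (hdim : Module.finrank K L = 2) (hnab : ∃ x y : L, ⁅x, y⁆ ≠ 0)
    (φ : L ≃ₗ⁅K⁆ L) (k : ℕ) (hk : 1 ≤ k) (hφ : ∀ x, (⇑φ)^[k] x = x) :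
    ∃ x : L, x ≠ 0 ∧ φ x = x := by
  have hadd : ∀ u v : L, φ (u + v) = φ u + φ v := fun u v => φ.toLinearEquiv.map_add u v
  have hsmul : ∀ (c : K) (u : L), φ (c • u) = c • φ u := fun c u => φ.toLinearEquiv.map_smul c u
  obtain ⟨x, y, hxy⟩ := hnab
  set w : L := ⁅x, y⁆ with hw
  have hw0 : w ≠ 0 := hxy
  -- every bracket is a multiple of w
  have hbr : ∀ u v : L, ∃ c : K, ⁅u, v⁆ = c • w := by
    intro u v
    obtain ⟨a, b, hu⟩ := aux_span hdim hxy u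
    obtain ⟨c, d, hv⟩ := aux_span hdim hxy v
    refine ⟨a * d - b * c, ?_⟩
    rw [← hu, ← hv]
    have hyx : ⁅y, x⁆ = -w := by rw [← lie_skew, hw]
    simp only [add_lie, lie_add, smul_lie, lie_smul, lie_self, smul_zero, smul_neg,
      add_zero, zero_add, hyx, ← hw, smul_smul, sub_smul, neg_smul]
    module
  -- write w in the basis x, y
  obtain ⟨α, β, hwab⟩ := aux_span hdim hxy w
  have h1 : ⁅w, y⁆ = α • w := by
    conv_lhs => rw [← hwab]
    simp [add_lie, smul_lie, ← hw]
  have h2 : ⁅x, w⁆ = β • w := by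
    conv_lhs => rw [← hwab]
    simp [lie_add, lie_smul, ← hw]
  -- find f with ⁅w, f⁆ = w
  have hf : ∃ f : L, ⁅w, f⁆ = w := by
    by_cases hα : α = 0
    · have hβ : β ≠ 0 := by
        rintro rfl
        rw [hα] at hwab
        simp at hwab
        exact hw0 hwab.symm
      refine ⟨(-β⁻¹) • x, ?_⟩
      have h3 : ⁅w, x⁆ = -(β • w) := by rw [← lie_skew w x, h2]
      rw [lie_smul, h3, neg_smul, smul_neg, neg_neg, smul_smul,
        inv_mul_cancel₀ hβ, one_smul]
    · exact ⟨α⁻¹ • y, by rw [lie_smul, h1, smul_smul, inv_mul_cancel₀ hα, one_smul]⟩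
  obtain ⟨f, hwf⟩ := hf
  have hwf0 : ⁅w, f⁆ ≠ 0 := by rw [hwf]; exact hw0
  -- φ w = lam • w
  obtain ⟨lam, hlam⟩ := hbr (φ x) (φ y)
  have hφw : φ w = lam • w := by
    rw [hw, LieEquiv.map_lie, hlam]
  have hlam0 : lam ≠ 0 := by
    rintro rfl
    rw [zero_smul] at hφw
    exact hw0 (φ.injective (by simpa using hφw))
  -- φ f = a • w + b • f with b = 1
  obtain ⟨a, b, hfab⟩ := aux_span hdim hwf0 (φ f)
  have key : φ ⁅w, f⁆ = ⁅φ w, φ f⁆ := LieEquiv.map_lie φ w f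
  rw [hwf, hφw, ← hfab] at key
  have key2 : lam • w = (lam * b) • w := by
    rw [key]
    simp [lie_add, lie_smul, smul_lie, hwf, smul_smul, mul_comm]
  have hb : b = 1 := by
    have h4 : lam * b = lam := by
      by_contra hne
      have h5 : (lam - lam * b) • w = 0 := by rw [sub_smul, key2]; abel
      rcases smul_eq_zero.mp h5 with h6 | h6
      · exact hne (by linear_combination -h6)
      · exact hw0 h6
    exact mul_left_cancel₀ hlam0 (h4.trans (mul_one lam).symm)
  subst hb
  rw [one_smul] at hfab
  by_cases hlam1 : lam = 1
  · exact ⟨w, hw0, by rw [hφw, hlam1, one_smul]⟩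
  · -- fixed vector c • w + f with c = a / (1 - lam)
    set c : K := a * (1 - lam)⁻¹ with hc
    refine ⟨c • w + f, ?_, ?_⟩
    · intro h0
      have h7 : ⁅w, c • w + f⁆ = 0 := by rw [h0, lie_zero]
      rw [lie_add, lie_smul, lie_self, smul_zero, zero_add, hwf] at h7
      exact hw0 h7
    · have h1lam : (1 : K) - lam ≠ 0 := sub_ne_zero.mpr (Ne.symm hlam1)
      have hceq : c * lam + a = c := by
        rw [hc]; field_simp; ring
      rw [hadd, hsmul, hφw, ← hfab, smul_smul, ← add_assoc, ← add_smul, hceq]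
end
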